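/- arXiv:2308.13034 — 2 statements merged into one kernel-verified Lean document; each statement's English description precedes it below -/
import Mathlib

section
/- Pathwise dominance principle for the discrete Bass realization: let p^A, p^B : Fin M → ℝ and q^A, q^B : Fin M → Fin M → ℝ be two sets of nonnegative rates with zero diagonal such that p^A_j ≤ p^B_j for all j and q^A_{k,j} ≤ q^B_{k,j} for all k, j. Let X^A(ω) and X^B(ω) be the discrete Bass realizations built from (p^A, q^A) and (p^B, q^B) respectively, with the same Δt and the same ω : Fin N → Fin M → ℝ. Then for every step n ≤ N and every node j, X^A(ω) n j = true implies X^B(ω) n j = true (the dominated network adopts pathwise no faster than the dominating one). -/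
open MeasureTheory

/-- Discrete Bass realization: adoption state of node `j` after `n` time steps,
for the realization `ω : Fin N → Fin M → ℝ` of the uniform variables. -/
noncomputable def bassX (M N : ℕ) (dt : ℝ) (p : Fin M → ℝ) (q : Fin M → Fin M → ℝ)
    (ω : Fin N → Fin M → ℝ) : ℕ → Fin M → Bool
  | 0, _ => false
  | n + 1, j =>
    if h : n < N then
      bassX M N dt p q ω n j ||
        (if ω ⟨n, h⟩ j ≤
            (p j + ∑ k, q k j * (if bassX M N dt p q ω n k = true then (1 : ℝ) else 0)) * dt
          then true else false)
    else
      bassX M N dt p q ω n j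

/-- Nonadoption indicator of node `i` after `N` steps. -/
noncomputable def bassG (M N : ℕ) (dt : ℝ) (p : Fin M → ℝ) (q : Fin M → Fin M → ℝ)
    (i : Fin M) (ω : Fin N → Fin M → ℝ) : ℝ :=
  if bassX M N dt p q ω N i = false then 1 else 0

/-- Uniform probability measure on the cube `[0,1]^{N×M}`. -/
noncomputable def cubeMeasure (N M : ℕ) : Measure (Fin N → Fin M → ℝ) :=
  Measure.pi fun _ => Measure.pi fun _ => volume.restrict (Set.Icc (0 : ℝ) 1)


/-! Both realizations read the same `ω`, and the adoption threshold of a node is increasing in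
the rates and, because influences are nonnegative, in the set of current adopters. So the
inclusion of adopter sets at step `n` propagates to step `n + 1`. -/

theorem bassX_succ_eq_true_iff {M N : ℕ} {dt : ℝ} {p : Fin M → ℝ} {q : Fin M → Fin M → ℝ}
    {ω : Fin N → Fin M → ℝ} {n : ℕ} {j : Fin M} :
    bassX M N dt p q ω (n + 1) j = true ↔
      bassX M N dt p q ω n j = true ∨ ∃ h : n < N,
        ω ⟨n, h⟩ j ≤
          (p j + ∑ k, q k j * (if bassX M N dt p q ω n k = true then (1 : ℝ) else 0)) * dt := by
  rw [bassX]
  by_cases h : n < N <;> simp [h]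

theorem sum_mul_indicator_le_of_imp {ι : Type*} [Fintype ι] {a b : ι → ℝ} {x y : ι → Bool}
    (hab : a ≤ b) (hb : 0 ≤ b) (hxy : ∀ k, x k = true → y k = true) :
    ∑ k, a k * (if x k = true then (1 : ℝ) else 0) ≤
      ∑ k, b k * (if y k = true then (1 : ℝ) else 0) := by
  refine Finset.sum_le_sum fun k _ => ?_
  by_cases hx : x k = true
  · simpa [hx, hxy k hx] using hab k
  · by_cases hy : y k = true
    · simpa [hx, hy] using hb k
    · simp [hx, hy]

theorem bassX_mono {M N : ℕ} {dt : ℝ} (hdt : 0 ≤ dt) {pA pB : Fin M → ℝ}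
    {qA qB : Fin M → Fin M → ℝ} (hqB : 0 ≤ qB) (hpAB : pA ≤ pB) (hqAB : qA ≤ qB)
    (ω : Fin N → Fin M → ℝ) (n : ℕ) (j : Fin M) :
    bassX M N dt pA qA ω n j = true → bassX M N dt pB qB ω n j = true := by
  induction n generalizing j with
  | zero => simp [bassX]
  | succ n ih =>
    simp only [bassX_succ_eq_true_iff]
    rintro (hadopted | ⟨hn, hω⟩)
    · exact Or.inl (ih j hadopted)
    · refine Or.inr ⟨hn, hω.trans (mul_le_mul_of_nonneg_right ?_ hdt)⟩
      exact add_le_add (hpAB j)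
        (sum_mul_indicator_le_of_imp (fun k => hqAB k j) (fun k => hqB k j) ih)

theorem bass_pathwise_dominance_general
    (M N : ℕ) (dt : ℝ) (hdt : 0 < dt)
    (pA pB : Fin M → ℝ)
    (qA qB : Fin M → Fin M → ℝ)
    (hqB : ∀ k j, 0 ≤ qB k j)
    (hpAB : ∀ j, pA j ≤ pB j) (hqAB : ∀ k j, qA k j ≤ qB k j)
    (ω : Fin N → Fin M → ℝ) :
    ∀ n, n ≤ N → ∀ j : Fin M,
      bassX M N dt pA qA ω n j = true → bassX M N dt pB qB ω n j = true :=
  fun n _ => bassX_mono hdt.le hqB hpAB hqAB ω n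

/-- Pathwise dominance principle: if the rates of network `A` are dominated by
those of network `B`, then with the same `ω` and `Δt`, network `A` adopts
pathwise no faster than network `B`. -/
theorem bass_pathwise_dominance
    (M N : ℕ) (hM : 1 ≤ M) (hN : 1 ≤ N) (dt : ℝ) (hdt : 0 < dt)
    (pA pB : Fin M → ℝ) (hpA : ∀ j, 0 ≤ pA j) (hpB : ∀ j, 0 ≤ pB j)
    (qA qB : Fin M → Fin M → ℝ)
    (hqA : ∀ k j, 0 ≤ qA k j) (hqB : ∀ k j, 0 ≤ qB k j)
    (hqAdiag : ∀ j, qA j j = 0) (hqBdiag : ∀ j, qB j j = 0)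
    (hpAB : ∀ j, pA j ≤ pB j) (hqAB : ∀ k j, qA k j ≤ qB k j)
    (ω : Fin N → Fin M → ℝ) :
    ∀ n, n ≤ N → ∀ j : Fin M,
      bassX M N dt pA qA ω n j = true → bassX M N dt pB qB ω n j = true :=
  bass_pathwise_dominance_general M N dt hdt pA pB qA qB hqB hpAB hqAB ω
end

section
/- One-sided diffusion on a bounded line is strictly slower than two-sided (possibly anisotropic) diffusion: let p > 0, q^L, q^R > 0, set q := q^L + q^R, let M ≥ 2 be an integer, and assume q^L ≠ j·p, q^R ≠ j·p and q ≠ j·p for every integer 1 ≤ j ≤ M−1. Then for every t > 0, Σ_{j=1}^{M} S_circle(t; p, q, j) > e^{pt} · Σ_{j=1}^{M} S_circle(t; p, q^L, j) · S_circle(t; p, q^R, M+1−j). Equivalently, the expected adoption level f_line^{1-sided}(t;p,q,M) = (1/M) Σ_{j=1}^{M} (1 − S_circle(t;p,q,j)) is strictly smaller than the two-sided adoption level f_line^{2-sided}(t;p,q^L,q^R,M) = (1/M) Σ_{j=1}^{M} (1 − e^{pt} S_circle(t;p,q^L,j) S_circle(t;p,q^R,M+1−j)). -/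
/-!
Write `S_m := S_circle(·; p, q, m)`. Every exponential mode of `S_m` solves the same linear
equation, so `S_{m+1}' = -(p + q) S_{m+1} + q e^{-pt} S_m` with `S_0 = 1`, `S_1 = e^{-pt}`, and
the recursion for the coefficients `c_k` is exactly what makes `S_m(0) = 1`. With the integrating
factor `e^{(p+q)t}` this gives `S_{m+1} < S_m` for `t > 0`, hence `S_m < e^{-pt}` for `m ≥ 2`.

The one-sided sum `A_n = Σ_{j ≤ n} S_j` and the two-sided sum `B_n` obey linear equations with the
same rate `p + q`, and `D_n = A_n - B_n` satisfies
`D_{n+1}' + (p + q) D_{n+1} = q e^{-pt} D_n + q^L (e^{-pt} - S^R_{n+1}) + q^R (e^{-pt} - S^L_{n+1})`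
with `D_n(0) = 0` and `D_1 = 0`. By induction on `n`, `D_n > 0` for `n ≥ 2` and `t > 0`.
-/

/-- The coefficient `c_{M−k}` of the explicit circle formula, as a function of
`k` (so `dcoef p q k = c_{M−k}`; this is independent of `M`), defined by the
backward recursion
`c_{M−k} = 1 − q^k/∏_{j=1}^{k}(q−jp) − Σ_{j=1}^{k−1} (p^{j−k}(−q)^{k−j}/(k−j)!)·c_{M−j}`. -/
noncomputable def dcoef (p q : ℝ) : ℕ → ℝ
  | k =>
    1 - q ^ k / (∏ j ∈ Finset.Icc 1 k, (q - (j : ℝ) * p)) -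
      ∑ j ∈ (Finset.Ico 1 k).attach,
        (p ^ ((j.1 : ℤ) - (k : ℤ)) * (-q) ^ (k - j.1) / (Nat.factorial (k - j.1)) *
          dcoef p q j.1)
  decreasing_by exact (Finset.mem_Ico.mp j.2).2

/-- Nonadoption probability of a node in the discrete Bass model on a one-sided
homogeneous circle with `M` nodes, external rate `p` and internal rate `q`:
`S_circle(t;p,q,M) = Σ_{k=1}^{M−1} c_k (−q)^{k−1}/(p^{k−1}(k−1)!) e^{(−kp−q)t}
                     + (−q)^{M−1}/∏_{j=1}^{M−1}(jp−q) · e^{−Mpt}`,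
where `c_k = dcoef p q (M−k)`. -/
noncomputable def Scircle (t p q : ℝ) (M : ℕ) : ℝ :=
  (∑ k ∈ Finset.Icc 1 (M - 1),
      dcoef p q (M - k) * ((-q) ^ (k - 1) / (p ^ (k - 1) * Nat.factorial (k - 1))) *
        Real.exp ((-(k : ℝ) * p - q) * t)) +
    ((-q) ^ (M - 1) / (∏ j ∈ Finset.Icc 1 (M - 1), ((j : ℝ) * p - q))) *
      Real.exp (-(M : ℝ) * p * t)

open Finset Real
open scoped Nat

theorem sum_Icc_one_eq_sum_range {M : Type*} [AddCommMonoid M] (f : ℕ → M) (n : ℕ) :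
    ∑ k ∈ Icc 1 n, f k = ∑ k ∈ range n, f (k + 1) := by
  rw [range_eq_Ico, sum_Ico_add']
  rfl

theorem hasDerivAt_exp_const_mul (c t : ℝ) :
    HasDerivAt (fun s => exp (c * s)) (c * exp (c * t)) t := by
  simpa [mul_comm] using ((hasDerivAt_id t).const_mul c).exp

theorem dcoef_eq_sum (p q : ℝ) (n : ℕ) :
    dcoef p q n = 1 - q ^ n / (∏ j ∈ Icc 1 n, (q - (j : ℝ) * p)) -
      ∑ j ∈ Ico 1 n, (-q) ^ (n - j) / (p ^ (n - j) * (n - j)!) * dcoef p q j := by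
  rw [dcoef, sum_attach (Ico 1 n) fun j => p ^ ((j : ℤ) - n) * (-q) ^ (n - j) / (n - j)! * dcoef p q j]
  congr 1
  refine sum_congr rfl fun j hj => ?_
  have hjn : (j : ℤ) - n = -((n - j : ℕ) : ℤ) := by
    have := (mem_Ico.mp hj).2; push_cast [Nat.cast_sub this.le]; ring
  rw [hjn, zpow_neg, zpow_natCast]
  ring

theorem pow_div_prod_sub_eq_neg_pow_div_prod (p q : ℝ) (n : ℕ) :
    q ^ n / (∏ j ∈ Icc 1 n, (q - (j : ℝ) * p)) = (-q) ^ n / (∏ j ∈ Icc 1 n, ((j : ℝ) * p - q)) := by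
  have hprod : ∏ j ∈ Icc 1 n, (q - (j : ℝ) * p) = (-1) ^ n * ∏ j ∈ Icc 1 n, ((j : ℝ) * p - q) := by
    calc ∏ j ∈ Icc 1 n, (q - (j : ℝ) * p) = ∏ j ∈ Icc 1 n, -((j : ℝ) * p - q) :=
          prod_congr rfl fun _ _ => (neg_sub _ _).symm
      _ = (-1) ^ n * ∏ j ∈ Icc 1 n, ((j : ℝ) * p - q) := by
        rw [prod_neg, Nat.card_Icc, Nat.add_sub_cancel]
  rw [hprod, neg_pow q]
  rcases neg_one_pow_eq_or ℝ n with h | h <;> simp [h, div_neg, neg_div]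

theorem sum_dcoef_mul (p q : ℝ) (n : ℕ) :
    ∑ k ∈ range n, dcoef p q (n - k) * ((-q) ^ k / (p ^ k * k !)) =
      1 - (-q) ^ n / (∏ j ∈ Icc 1 n, ((j : ℝ) * p - q)) := by
  cases n with
  | zero => simp
  | succ n =>
    set F : ℕ → ℝ := fun j => (-q) ^ (n + 1 - j) / (p ^ (n + 1 - j) * (n + 1 - j)!) * dcoef p q j
    have hreflect : ∑ k ∈ range n, dcoef p q (n - k) * ((-q) ^ (k + 1) / (p ^ (k + 1) * (k + 1)!)) =
        ∑ j ∈ Ico 1 (n + 1), F j := by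
      have hterm : ∀ k ∈ range n,
          dcoef p q (n - k) * ((-q) ^ (k + 1) / (p ^ (k + 1) * (k + 1)!)) = F (n - k) := by
        intro k hk
        simp only [F]
        rw [show n + 1 - (n - k) = k + 1 by have := mem_range.mp hk; omega, mul_comm]
      rw [sum_congr rfl hterm, range_eq_Ico, sum_Ico_reflect F 0 n.le_succ, Nat.add_sub_cancel_left,
        Nat.sub_zero]
    rw [sum_range_succ', Nat.sub_zero, dcoef_eq_sum, pow_div_prod_sub_eq_neg_pow_div_prod]
    simp only [Nat.add_sub_add_right, hreflect, pow_zero, Nat.factorial_zero, Nat.cast_one, mul_one,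
      div_self one_ne_zero]
    ring

noncomputable def expTerm (p q : ℝ) (k : ℕ) (t : ℝ) : ℝ :=
  (-q) ^ k / (p ^ k * k !) * exp ((-((k : ℝ) + 1) * p - q) * t)

noncomputable def expTail (p q : ℝ) (n : ℕ) (t : ℝ) : ℝ :=
  (-q) ^ n / (∏ j ∈ Icc 1 n, ((j : ℝ) * p - q)) * exp (-((n : ℝ) + 1) * p * t)

-- `M - 1` truncates, so at `M = 0` the formula collapses to the constant `1`: a natural `S_0`.
theorem Scircle_zero (t p q : ℝ) : Scircle t p q 0 = 1 := by
  simp [Scircle]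

theorem Scircle_one (t p q : ℝ) : Scircle t p q 1 = exp (-p * t) := by
  simp [Scircle]

theorem Scircle_succ (t p q : ℝ) (n : ℕ) :
    Scircle t p q (n + 1) =
      ∑ k ∈ range n, dcoef p q (n - k) * expTerm p q k t + expTail p q n t := by
  rw [Scircle, Nat.add_sub_cancel, sum_Icc_one_eq_sum_range]
  congr 1
  · refine sum_congr rfl fun k _ => ?_
    simp only [expTerm, Nat.add_sub_cancel, Nat.add_sub_add_right]
    push_cast
    ring
  · simp only [expTail]
    push_cast
    ring

theorem Scircle_time_zero (p q : ℝ) (m : ℕ) : Scircle 0 p q m = 1 := by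
  cases m with
  | zero => exact Scircle_zero 0 p q
  | succ n =>
    rw [Scircle_succ]
    simp only [expTerm, expTail, mul_zero, exp_zero, mul_one]
    rw [sum_dcoef_mul]
    ring

theorem hasDerivAt_expTerm (p q : ℝ) (k : ℕ) (t : ℝ) :
    HasDerivAt (expTerm p q k) (-(((k : ℝ) + 1) * p + q) * expTerm p q k t) t := by
  refine ((hasDerivAt_exp_const_mul (-((k : ℝ) + 1) * p - q) t).const_mul
    ((-q) ^ k / (p ^ k * k !))).congr_deriv ?_
  simp only [expTerm]
  ring

theorem hasDerivAt_expTerm_succ {p : ℝ} (hp : p ≠ 0) (q : ℝ) (k : ℕ) (t : ℝ) :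
    HasDerivAt (expTerm p q (k + 1))
      (-(p + q) * expTerm p q (k + 1) t + q * exp (-p * t) * expTerm p q k t) t := by
  convert hasDerivAt_expTerm p q (k + 1) t using 1
  have hexp : exp (-p * t) * exp ((-((k : ℝ) + 1) * p - q) * t) =
      exp ((-(((k + 1 : ℕ) : ℝ) + 1) * p - q) * t) := by
    rw [← exp_add]; push_cast; ring_nf
  simp only [expTerm, ← hexp, Nat.factorial_succ]
  push_cast
  field_simp
  ring

theorem hasDerivAt_expTail_succ (p : ℝ) {q : ℝ} (n : ℕ) (hq : q ≠ ((n : ℝ) + 1) * p) (t : ℝ) :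
    HasDerivAt (expTail p q (n + 1))
      (-(p + q) * expTail p q (n + 1) t + q * exp (-p * t) * expTail p q n t) t := by
  refine ((hasDerivAt_exp_const_mul (-(((n + 1 : ℕ) : ℝ) + 1) * p) t).const_mul
    ((-q) ^ (n + 1) / ∏ j ∈ Icc 1 (n + 1), ((j : ℝ) * p - q))).congr_deriv ?_
  have hexp : exp (-p * t) * exp (-((n : ℝ) + 1) * p * t) =
      exp (-(((n + 1 : ℕ) : ℝ) + 1) * p * t) := by
    rw [← exp_add]; push_cast; ring_nf
  have htop : ((n + 1 : ℕ) : ℝ) * p - q ≠ 0 := by push_cast; exact sub_ne_zero.mpr hq.symm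
  simp only [expTail, ← hexp, prod_Icc_succ_top (Nat.le_add_left 1 n)]
  rcases eq_or_ne (∏ j ∈ Icc 1 n, ((j : ℝ) * p - q)) 0 with h0 | h0
  · simp [h0]
  · push_cast at htop ⊢
    generalize (∏ j ∈ Icc 1 n, ((j : ℝ) * p - q)) = P at h0 ⊢
    field_simp
    ring

theorem hasDerivAt_Scircle_add_two {p : ℝ} (hp : p ≠ 0) {q : ℝ} (n : ℕ)
    (hq : q ≠ ((n : ℝ) + 1) * p) (t : ℝ) :
    HasDerivAt (fun s => Scircle s p q (n + 2))
      (-(p + q) * Scircle t p q (n + 2) + q * exp (-p * t) * Scircle t p q (n + 1)) t := by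
  have hsplit : ∀ s, Scircle s p q (n + 2) = ∑ k ∈ range n, dcoef p q (n - k) * expTerm p q (k + 1) s +
      dcoef p q (n + 1) * expTerm p q 0 s + expTail p q (n + 1) s := fun s => by
    rw [Scircle_succ, sum_range_succ']
    simp only [Nat.add_sub_add_right, Nat.sub_zero]
  simp only [hsplit]
  refine (((HasDerivAt.fun_sum fun k _ => (hasDerivAt_expTerm_succ hp q k t).const_mul _).add
    ((hasDerivAt_expTerm p q 0 t).const_mul _)).add (hasDerivAt_expTail_succ p n hq t)).congr_deriv ?_
  have hsum : ∑ k ∈ range n, dcoef p q (n - k) *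
        (-(p + q) * expTerm p q (k + 1) t + q * exp (-p * t) * expTerm p q k t) =
      -(p + q) * ∑ k ∈ range n, dcoef p q (n - k) * expTerm p q (k + 1) t +
        q * exp (-p * t) * ∑ k ∈ range n, dcoef p q (n - k) * expTerm p q k t := by
    rw [mul_sum, mul_sum, ← sum_add_distrib]
    exact sum_congr rfl fun _ _ => by ring
  rw [Scircle_succ, hsum]
  push_cast
  ring

def NonResonant (p q : ℝ) (M : ℕ) : Prop :=
  ∀ j : ℕ, 1 ≤ j → j ≤ M - 1 → q ≠ j * p

theorem NonResonant.mono {p q : ℝ} {M N : ℕ} (h : NonResonant p q M) (hNM : N ≤ M) :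
    NonResonant p q N :=
  fun j hj hjN => h j hj (by omega)

theorem hasDerivAt_Scircle_succ {p : ℝ} (hp : p ≠ 0) {q : ℝ} {m : ℕ} (hq : NonResonant p q (m + 1))
    (t : ℝ) :
    HasDerivAt (fun s => Scircle s p q (m + 1))
      (-(p + q) * Scircle t p q (m + 1) + q * exp (-p * t) * Scircle t p q m) t := by
  cases m with
  | zero =>
    simp only [zero_add, Scircle_one, Scircle_zero]
    exact (hasDerivAt_exp_const_mul (-p) t).congr_deriv (by ring)
  | succ n =>
    exact hasDerivAt_Scircle_add_two hp n (by exact_mod_cast hq (n + 1) (by omega) (by omega)) t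

theorem pos_of_hasDerivAt_of_add_mul_pos {f f' : ℝ → ℝ} (c : ℝ)
    (hf : ∀ t, HasDerivAt f (f' t) t) (h0 : 0 ≤ f 0) (hpos : ∀ t, 0 < t → 0 < f' t + c * f t)
    {t : ℝ} (ht : 0 < t) : 0 < f t := by
  have hg : ∀ s, HasDerivAt (fun s => exp (c * s) * f s) (exp (c * s) * (f' s + c * f s)) s :=
    fun s => ((hasDerivAt_exp_const_mul c s).mul (hf s)).congr_deriv (by ring)
  have hmono : StrictMonoOn (fun s => exp (c * s) * f s) (Set.Ici 0) := by
    refine strictMonoOn_of_deriv_pos (convex_Ici 0)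
      (fun s _ => (hg s).continuousAt.continuousWithinAt) fun s hs => ?_
    rw [interior_Ici] at hs
    rw [(hg s).deriv]
    exact mul_pos (exp_pos _) (hpos s hs)
  have hlt := hmono Set.self_mem_Ici ht.le ht
  simp only [mul_zero, exp_zero, one_mul] at hlt
  exact pos_of_mul_pos_right (h0.trans_lt hlt) (exp_pos _).le

theorem Scircle_succ_lt {p q : ℝ} (hp : 0 < p) (hq : 0 < q) {m : ℕ} (hres : NonResonant p q (m + 1))
    {t : ℝ} (ht : 0 < t) : Scircle t p q (m + 1) < Scircle t p q m := by
  induction m generalizing t with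
  | zero =>
    rw [Scircle_one, Scircle_zero, Real.exp_lt_one_iff]
    nlinarith
  | succ m ih =>
    refine sub_pos.mp (pos_of_hasDerivAt_of_add_mul_pos (p + q)
      (fun s => (hasDerivAt_Scircle_succ hp.ne' (hres.mono (by omega)) s).sub
        (hasDerivAt_Scircle_succ hp.ne' hres s)) (by simp [Scircle_time_zero]) (fun s hs => ?_) ht)
    have hdrop := ih (hres.mono (by omega)) hs
    have hkey : 0 < q * exp (-p * s) * (Scircle s p q m - Scircle s p q (m + 1)) :=
      mul_pos (mul_pos hq (exp_pos _)) (sub_pos.mpr hdrop)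
    simp only [Pi.sub_apply]
    linarith

theorem Scircle_lt_exp {p q : ℝ} (hp : 0 < p) (hq : 0 < q) {m : ℕ} (hm : 2 ≤ m)
    (hres : NonResonant p q m) {t : ℝ} (ht : 0 < t) : Scircle t p q m < exp (-p * t) := by
  induction m, hm using Nat.le_induction with
  | base => simpa [Scircle_one] using Scircle_succ_lt hp hq hres ht
  | succ m hm ih =>
    exact (Scircle_succ_lt hp hq hres ht).trans (ih (hres.mono m.le_succ))

noncomputable def oneSidedSum (t p q : ℝ) (n : ℕ) : ℝ :=
  ∑ j ∈ range n, Scircle t p q (j + 1)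

noncomputable def twoSidedSum (t p qL qR : ℝ) (n : ℕ) : ℝ :=
  exp (p * t) * ∑ j ∈ range n, Scircle t p qL (j + 1) * Scircle t p qR (n - j)

theorem oneSidedSum_time_zero (p q : ℝ) (n : ℕ) : oneSidedSum 0 p q n = n := by
  simp [oneSidedSum, Scircle_time_zero]

theorem twoSidedSum_time_zero (p qL qR : ℝ) (n : ℕ) : twoSidedSum 0 p qL qR n = n := by
  simp [twoSidedSum, Scircle_time_zero]

theorem twoSidedSum_one (t p qL qR q : ℝ) : twoSidedSum t p qL qR 1 = oneSidedSum t p q 1 := by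
  simp only [twoSidedSum, oneSidedSum, sum_range_one, zero_add, Nat.sub_zero, Scircle_one,
    ← exp_add]
  ring_nf

theorem hasDerivAt_oneSidedSum_succ {p : ℝ} (hp : p ≠ 0) {q : ℝ} {n : ℕ}
    (hres : NonResonant p q (n + 1)) (t : ℝ) :
    HasDerivAt (fun s => oneSidedSum s p q (n + 1))
      (-(p + q) * oneSidedSum t p q (n + 1) + q * exp (-p * t) * (1 + oneSidedSum t p q n)) t := by
  refine (HasDerivAt.fun_sum fun j hj =>
    hasDerivAt_Scircle_succ hp (hres.mono (by simp at hj; omega)) t).congr_deriv ?_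
  have hshift : ∑ j ∈ range (n + 1), Scircle t p q j = 1 + oneSidedSum t p q n := by
    rw [sum_range_succ', Scircle_zero, add_comm, oneSidedSum]
  rw [sum_add_distrib, ← mul_sum, ← mul_sum, hshift]
  rfl

theorem hasDerivAt_twoSidedSum_succ {p : ℝ} (hp : p ≠ 0) {qL qR : ℝ} {n : ℕ}
    (hL : NonResonant p qL (n + 1)) (hR : NonResonant p qR (n + 1)) (t : ℝ) :
    HasDerivAt (fun s => twoSidedSum s p qL qR (n + 1))
      (-(p + (qL + qR)) * twoSidedSum t p qL qR (n + 1) +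
        (qL + qR) * exp (-p * t) * twoSidedSum t p qL qR n +
        qL * Scircle t p qR (n + 1) + qR * Scircle t p qL (n + 1)) t := by
  set L := fun j => Scircle t p qL j
  set R := fun j => Scircle t p qR j
  have hR' : ∀ j ∈ range (n + 1), HasDerivAt (fun s => Scircle s p qR (n + 1 - j))
      (-(p + qR) * R (n + 1 - j) + qR * exp (-p * t) * R (n - j)) t := by
    intro j hj
    rw [show n + 1 - j = n - j + 1 by have := mem_range.mp hj; omega]
    exact hasDerivAt_Scircle_succ hp (hR.mono (by omega)) t
  refine ((hasDerivAt_exp_const_mul p t).mul (HasDerivAt.fun_sum fun j hj =>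
    (hasDerivAt_Scircle_succ hp (hL.mono (by simp at hj; omega)) t).mul (hR' j hj))).congr_deriv ?_
  have hsum : ∑ j ∈ range (n + 1),
      ((-(p + qL) * L (j + 1) + qL * exp (-p * t) * L j) * R (n + 1 - j) +
        L (j + 1) * (-(p + qR) * R (n + 1 - j) + qR * exp (-p * t) * R (n - j))) =
      -(2 * p + qL + qR) * ∑ j ∈ range (n + 1), L (j + 1) * R (n + 1 - j) +
        qL * exp (-p * t) * ∑ j ∈ range (n + 1), L j * R (n + 1 - j) +
        qR * exp (-p * t) * ∑ j ∈ range (n + 1), L (j + 1) * R (n - j) := by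
    simp only [mul_sum, ← sum_add_distrib]
    exact sum_congr rfl fun _ _ => by ring
  have hleft : ∑ j ∈ range (n + 1), L j * R (n + 1 - j) =
      R (n + 1) + ∑ j ∈ range n, L (j + 1) * R (n - j) := by
    rw [sum_range_succ', add_comm]
    simp [L, Scircle_zero]
  have hright : ∑ j ∈ range (n + 1), L (j + 1) * R (n - j) =
      L (n + 1) + ∑ j ∈ range n, L (j + 1) * R (n - j) := by
    rw [sum_range_succ, add_comm]
    simp [R, Scircle_zero]
  have hexp : exp (p * t) * exp (-p * t) = 1 := by rw [← exp_add]; simp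
  rw [hsum, hleft, hright, twoSidedSum, twoSidedSum]
  linear_combination (qL * R (n + 1) + qR * L (n + 1)) * hexp

theorem twoSidedSum_lt_oneSidedSum_succ {p qL qR : ℝ} (hp : 0 < p) (hqL : 0 < qL) (hqR : 0 < qR)
    {n : ℕ} (hn : 1 ≤ n) (hL : NonResonant p qL (n + 1)) (hR : NonResonant p qR (n + 1))
    (hq : NonResonant p (qL + qR) (n + 1))
    (hle : ∀ t, 0 < t → twoSidedSum t p qL qR n ≤ oneSidedSum t p (qL + qR) n)
    {t : ℝ} (ht : 0 < t) : twoSidedSum t p qL qR (n + 1) < oneSidedSum t p (qL + qR) (n + 1) := by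
  refine sub_pos.mp (pos_of_hasDerivAt_of_add_mul_pos (p + (qL + qR))
    (fun s => (hasDerivAt_oneSidedSum_succ hp.ne' hq s).sub (hasDerivAt_twoSidedSum_succ hp.ne' hL hR s))
    (by simp [oneSidedSum_time_zero, twoSidedSum_time_zero]) (fun s hs => ?_) ht)
  have he := exp_pos (-p * s)
  have hLlt := Scircle_lt_exp hp hqL (by omega) hL hs
  have hRlt := Scircle_lt_exp hp hqR (by omega) hR hs
  have hgap := mul_nonneg (mul_nonneg (add_pos hqL hqR).le he.le) (sub_nonneg.mpr (hle s hs))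
  simp only [Pi.sub_apply]
  linarith [mul_pos hqL (sub_pos.mpr hRlt), mul_pos hqR (sub_pos.mpr hLlt)]

theorem twoSidedSum_lt_oneSidedSum {p qL qR : ℝ} (hp : 0 < p) (hqL : 0 < qL) (hqR : 0 < qR)
    {n : ℕ} (hn : 2 ≤ n) (hL : NonResonant p qL n) (hR : NonResonant p qR n)
    (hq : NonResonant p (qL + qR) n) {t : ℝ} (ht : 0 < t) :
    twoSidedSum t p qL qR n < oneSidedSum t p (qL + qR) n := by
  induction n, hn using Nat.le_induction generalizing t with
  | base =>
    exact twoSidedSum_lt_oneSidedSum_succ hp hqL hqR le_rfl hL hR hq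
      (fun s _ => (twoSidedSum_one s p qL qR (qL + qR)).le) ht
  | succ n hn ih =>
    exact twoSidedSum_lt_oneSidedSum_succ hp hqL hqR (by omega) hL hR hq
      (fun s hs => (ih (hL.mono n.le_succ) (hR.mono n.le_succ) (hq.mono n.le_succ) hs).le) ht

/-- One-sided diffusion on a bounded line is strictly slower than two-sided
(possibly anisotropic) diffusion: for `p > 0`, `q^L, q^R > 0`,
`q := q^L + q^R`, `M ≥ 2`, under the nondegeneracy conditions, for every
`t > 0`,
`Σ_{j=1}^{M} S_circle(t;p,q,j) >
  e^{pt} · Σ_{j=1}^{M} S_circle(t;p,q^L,j) · S_circle(t;p,q^R,M+1−j)`;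
equivalently `f_line^{1-sided} < f_line^{2-sided}`. -/
theorem line_one_sided_slower_than_two_sided
    (p qL qR : ℝ) (hp : 0 < p) (hqL : 0 < qL) (hqR : 0 < qR)
    (M : ℕ) (hM : 2 ≤ M)
    (hnd : ∀ j : ℕ, 1 ≤ j → j ≤ M - 1 →
      qL ≠ (j : ℝ) * p ∧ qR ≠ (j : ℝ) * p ∧ qL + qR ≠ (j : ℝ) * p)
    (t : ℝ) (ht : 0 < t) :
    ∑ j ∈ Finset.Icc 1 M, Scircle t p (qL + qR) j >
      Real.exp (p * t) *
        ∑ j ∈ Finset.Icc 1 M, Scircle t p qL j * Scircle t p qR (M + 1 - j) := by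
  have h := twoSidedSum_lt_oneSidedSum hp hqL hqR hM (fun j h1 h2 => (hnd j h1 h2).1)
    (fun j h1 h2 => (hnd j h1 h2).2.1) (fun j h1 h2 => (hnd j h1 h2).2.2) ht
  rw [gt_iff_lt, sum_Icc_one_eq_sum_range, sum_Icc_one_eq_sum_range]
  simp only [Nat.add_sub_add_right]
  exact h
end
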